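/- arXiv:1201.0420 — 6 statements merged into one kernel-verified Lean document; each statement's English description precedes it below -/
import Mathlib

section
/- For all natural numbers n, the sum over k from 1 to n of k³·H_k equals n²(n+1)²/4 · H_n - (n-1)n(n+1)(3n-2)/48. -/
open Finset BigOperators

def H (n : ℕ) : ℚ := ∑ i ∈ Finset.range n, 1 / (i + 1 : ℚ)

def H2 (n : ℕ) : ℚ := ∑ i ∈ Finset.range n, 1 / ((i + 1 : ℚ))^2

theorem stmt3 (n : ℕ) :
    ∑ k ∈ Finset.Icc 1 n, (k : ℚ)^3 * H k
      = (n : ℚ)^2 * (n + 1)^2 / 4 * H n - ((n : ℚ) - 1) * n * (n + 1) * (3 * n - 2) / 48 := by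
  induction n with
  | zero => simp [H]
  | succ n ih =>
    rw [Finset.sum_Icc_succ_top (by omega), ih]
    have hH : H (n + 1) = H n + 1 / (n + 1 : ℚ) := by
      simp [H, Finset.sum_range_succ]
    rw [hH]
    have h : (n : ℚ) + 1 ≠ 0 := by positivity
    push_cast
    field_simp
    ring
end

section
/- For all natural numbers p, q, n, the sum over k from 0 to n of C(p+k, p)·C(q+n-k, q)·H_{p+k} equals C(p+q+n+1, n)·(H_p + H_{p+q+n+1} - H_{p+q+1}). -/
open Finset BigOperators

lemma Hsucc (m : ℕ) : H (m+1) = H m + 1/(m+1 : ℚ) := by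
  rw [H, Finset.sum_range_succ]; rfl

lemma alg0 (p n : ℕ) :
    ((p+n+1).choose n : ℚ) * (H p + H (p+n+1) - H (p+1)) + ((p+n+1).choose p : ℚ) * H (p+n+1)
      = ((p+n+2).choose (n+1) : ℚ) * (H p + H (p+n+2) - H (p+1)) := by
  have hsym : (p+n+1).choose p = (p+n+1).choose (n+1) := by
    rw [← Nat.choose_symm (by omega : p ≤ p+n+1)]
    congr 1; omega
  have hrel : ((p+n+1).choose (n+1) : ℚ) * (n+1) = ((p+n+1).choose n : ℚ) * (p+1) := by
    have := Nat.choose_succ_right_eq (p+n+1) n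
    have h2 : p+n+1-n = p+1 := by omega
    rw [h2] at this
    exact_mod_cast congrArg (Nat.cast : ℕ → ℚ) this
  have hpas : ((p+n+2).choose (n+1) : ℚ) = ((p+n+1).choose n : ℚ) + ((p+n+1).choose (n+1) : ℚ) := by
    have := Nat.choose_succ_succ' (p+n+1) n
    have h2 : p+n+1+1 = p+n+2 := by omega
    rw [h2] at this
    exact_mod_cast congrArg (Nat.cast : ℕ → ℚ) this
  have h1 : H (p+1) = H p + 1/(p+1 : ℚ) := Hsucc p
  have h2 : H (p+n+2) = H (p+n+1) + 1/(p+n+2 : ℚ) := by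
    have := Hsucc (p+n+1); rw [show p+n+1+1 = p+n+2 by omega] at this
    rw [this]; push_cast; ring_nf
  rw [hsym, hpas, h1, h2]
  have hp1 : (p:ℚ)+1 ≠ 0 := by positivity
  have hpn2 : (p:ℚ)+n+2 ≠ 0 := by positivity
  have hn1 : (n:ℚ)+1 ≠ 0 := by positivity
  set x : ℚ := 1/((p:ℚ)+1) with hxdef
  set y : ℚ := 1/((p:ℚ)+n+2) with hydef
  have hx : x*((p:ℚ)+1) = 1 := by rw [hxdef]; field_simp
  have hy : y*((p:ℚ)+n+2) = 1 := by rw [hydef]; field_simp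
  linear_combination x*y*hrel + (((p+n+1).choose n : ℚ)*y + ((p+n+1).choose (n+1) : ℚ)*y)*hx - ((p+n+1).choose (n+1) : ℚ)*x*hy

lemma base0 (p n : ℕ) :
    ∑ k ∈ Finset.range (n + 1), ((p + k).choose p : ℚ) * H (p + k)
      = ((p+n+1).choose n : ℚ) * (H p + H (p+n+1) - H (p+1)) := by
  induction n with
  | zero => simp
  | succ n ih =>
    rw [Finset.sum_range_succ, ih]
    have e1 : p + (n+1) = p + n + 1 := by omega
    have e2 : p + n + 1 + 1 = p + n + 2 := by omega
    rw [e1, e2]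
    exact alg0 p n

lemma alg1 (p q n : ℕ) :
    ((p+q+n+2).choose (n+1) : ℚ) * (H p + H (p+q+n+2) - H (p+q+1))
      + ((p+q+n+2).choose n : ℚ) * (H p + H (p+q+n+2) - H (p+q+2))
    = ((p+q+n+3).choose (n+1) : ℚ) * (H p + H (p+q+n+3) - H (p+q+2)) := by
  have hpas : ((p+q+n+3).choose (n+1) : ℚ)
      = ((p+q+n+2).choose n : ℚ) + ((p+q+n+2).choose (n+1) : ℚ) := by
    have := Nat.choose_succ_succ' (p+q+n+2) n
    rw [show p+q+n+2+1 = p+q+n+3 by omega] at this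
    exact_mod_cast congrArg (Nat.cast : ℕ → ℚ) this
  have hrel : ((p+q+n+2).choose (n+1) : ℚ) * ((p:ℚ)+q+n+3)
      = (((p+q+n+2).choose n : ℚ) + ((p+q+n+2).choose (n+1) : ℚ)) * ((p:ℚ)+q+2) := by
    have := Nat.choose_mul_succ_eq (p+q+n+2) (n+1)
    rw [show p+q+n+2+1-(n+1) = p+q+2 by omega, show p+q+n+2+1 = p+q+n+3 by omega,
      Nat.choose_succ_succ' (p+q+n+2) n] at this
    exact_mod_cast congrArg (Nat.cast : ℕ → ℚ) this
  have h2 : H (p+q+n+3) = H (p+q+n+2) + 1/((p:ℚ)+q+n+3) := by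
    have := Hsucc (p+q+n+2); rw [show p+q+n+2+1 = p+q+n+3 by omega] at this
    rw [this]; push_cast; ring_nf
  have h3 : H (p+q+2) = H (p+q+1) + 1/((p:ℚ)+q+2) := by
    have := Hsucc (p+q+1); rw [show p+q+1+1 = p+q+2 by omega] at this
    rw [this]; push_cast; ring_nf
  rw [hpas, h2, h3]
  set x : ℚ := 1/((p:ℚ)+q+2) with hxdef
  set y : ℚ := 1/((p:ℚ)+q+n+3) with hydef
  have hx : x*((p:ℚ)+q+2) = 1 := by rw [hxdef]; field_simp
  have hy : y*((p:ℚ)+q+n+3) = 1 := by rw [hydef]; field_simp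
  linear_combination x*y*hrel
    + ((((p+q+n+2).choose n : ℚ) + ((p+q+n+2).choose (n+1) : ℚ))*y)*hx
    - (((p+q+n+2).choose (n+1) : ℚ)*x)*hy

theorem stmt4 (p q n : ℕ) :
    ∑ k ∈ Finset.range (n + 1),
        ((p + k).choose p : ℚ) * ((q + n - k).choose q : ℚ) * H (p + k)
      = ((p + q + n + 1).choose n : ℚ) * (H p + H (p + q + n + 1) - H (p + q + 1)) := by
  induction q generalizing n with
  | zero =>
    have h : ∀ k ∈ Finset.range (n+1),
        ((p+k).choose p : ℚ) * ((0+n-k).choose 0 : ℚ) * H (p+k)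
          = ((p+k).choose p : ℚ) * H (p+k) := by
      intro k hk; simp
    rw [Finset.sum_congr rfl h, base0 p n,
      show p+0+n+1 = p+n+1 from by omega, show p+0+1 = p+1 from by omega]
  | succ q ih =>
    induction n with
    | zero =>
      rw [Finset.sum_range_one]
      simp [show p+(q+1)+0+1 = p+(q+1)+1 from by omega]
    | succ n ihn =>
      have split : ∀ k ∈ Finset.range (n+1+1),
          ((p+k).choose p : ℚ) * ((q+1+(n+1)-k).choose (q+1) : ℚ) * H (p+k)
          = ((p+k).choose p : ℚ) * ((q+(n+1)-k).choose q : ℚ) * H (p+k)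
            + ((p+k).choose p : ℚ) * ((q+(n+1)-k).choose (q+1) : ℚ) * H (p+k) := by
        intro k hk
        rw [Finset.mem_range] at hk
        rw [show q+1+(n+1)-k = (q+(n+1)-k)+1 from by omega,
          Nat.choose_succ_succ' (q+(n+1)-k) q]
        push_cast; ring
      rw [Finset.sum_congr rfl split, Finset.sum_add_distrib, ih (n+1),
        Finset.sum_range_succ]
      have hlast : ((p+(n+1)).choose p : ℚ) * ((q+(n+1)-(n+1)).choose (q+1) : ℚ) * H (p+(n+1)) = 0 := by
        rw [show q+(n+1)-(n+1) = q from by omega, Nat.choose_succ_self]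
        simp
      rw [hlast, add_zero]
      have hcong : ∀ k ∈ Finset.range (n+1),
          ((p+k).choose p : ℚ) * ((q+(n+1)-k).choose (q+1) : ℚ) * H (p+k)
          = ((p+k).choose p : ℚ) * ((q+1+n-k).choose (q+1) : ℚ) * H (p+k) := by
        intro k hk; rw [Finset.mem_range] at hk
        rw [show q+(n+1)-k = q+1+n-k from by omega]
      rw [Finset.sum_congr rfl hcong, ihn]
      rw [show p+q+(n+1)+1 = p+q+n+2 from by omega,
        show p+(q+1)+n+1 = p+q+n+2 from by omega,
        show p+(q+1)+1 = p+q+2 from by omega,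
        show p+(q+1)+(n+1)+1 = p+q+n+3 from by omega]
      exact alg1 p q n
end

section
/- For all natural numbers p, q, n, the sum over k from 0 to n of C(p+k, p)·C(q+n-k, q)·H_{p+k}·H_{q+n-k} equals C(p+q+n+1, n)·[(H^{(2)}_{p+q+1} - H^{(2)}_{p+q+n+1}) + (H_p - H_{p+q+1} + H_{p+q+n+1})·(H_q - H_{p+q+1} + H_{p+q+n+1})]. -/
/-!
Both weights satisfy first-order recurrences in `k`: `(k+1) C(p+k+1,p) = (p+k+1) C(p+k,p)`,
and `C(p+k,p) H_{p+k}` obeys the same recurrence perturbed by `C(p+k,p)`. On generating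
functions these read `(1-x) f' = (p+1) f + g`, so by the Leibniz rule they pass to Cauchy
products, with the parameters adding. Hence the sum, as well as the Vandermonde-type sum
`∑ C(p+k,p) C(q+n-k,q) = C(p+q+n+1,n)` and the sums with a single harmonic factor, satisfy
first-order recurrences in `n`, which the closed forms are checked against by induction.
-/

open Finset BigOperators

def cauchyProduct {R : Type*} [CommSemiring R] (a b : ℕ → R) (n : ℕ) : R :=
  ∑ ij ∈ antidiagonal n, a ij.1 * b ij.2

lemma cauchyProduct_comm {R : Type*} [CommSemiring R] (a b : ℕ → R) (n : ℕ) :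
    cauchyProduct a b n = cauchyProduct b a n := by
  rw [cauchyProduct, ← Nat.sum_antidiagonal_swap]
  simp only [cauchyProduct, Prod.fst_swap, Prod.snd_swap, mul_comm]

lemma cauchyProduct_zero {R : Type*} [CommSemiring R] (a b : ℕ → R) :
    cauchyProduct a b 0 = a 0 * b 0 := by
  simp [cauchyProduct]

lemma succ_mul_cauchyProduct_succ {R : Type*} [CommRing R] {a a' b b' : ℕ → R} {α β : R}
    (ha : ∀ k : ℕ, (k + 1) * a (k + 1) = (α + k + 1) * a k + a' k)
    (hb : ∀ k : ℕ, (k + 1) * b (k + 1) = (β + k + 1) * b k + b' k) (n : ℕ) :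
    (n + 1) * cauchyProduct a b (n + 1)
      = (α + β + n + 2) * cauchyProduct a b n + cauchyProduct a' b n + cauchyProduct a b' n := by
  have split : (n + 1) * cauchyProduct a b (n + 1)
      = ∑ ij ∈ antidiagonal (n + 1), (ij.1 : R) * a ij.1 * b ij.2
        + ∑ ij ∈ antidiagonal (n + 1), a ij.1 * ((ij.2 : R) * b ij.2) := by
    rw [cauchyProduct, mul_sum, ← sum_add_distrib]
    refine sum_congr rfl fun ij hij => ?_
    have hn : (ij.1 : R) + ij.2 = n + 1 := by
      rw [← Nat.cast_add, mem_antidiagonal.mp hij, Nat.cast_succ]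
    linear_combination -(a ij.1 * b ij.2) * hn
  rw [split, Nat.sum_antidiagonal_succ, Nat.sum_antidiagonal_succ']
  simp only [Nat.cast_zero, zero_mul, mul_zero, zero_add, cauchyProduct, mul_sum,
    ← sum_add_distrib]
  refine sum_congr rfl fun ij hij => ?_
  have hn : (ij.1 : R) + ij.2 = n := by rw [← Nat.cast_add, mem_antidiagonal.mp hij]
  push_cast
  linear_combination b ij.2 * ha ij.1 + a ij.1 * hb ij.2 + a ij.1 * b ij.2 * hn

lemma eq_choose_mul_of_succ_mul {x r G : ℕ → ℚ} {m : ℕ} (h0 : x 0 = G 0)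
    (hx : ∀ n : ℕ, (n + 1) * x (n + 1)
      = (m + n + 2) * x n + ((m + n + 1).choose n : ℚ) * r n)
    (hG : ∀ n : ℕ, (m + n + 2) * (G (n + 1) - G n) = r n) (n : ℕ) :
    x n = ((m + n + 1).choose n : ℚ) * G n := by
  induction n with
  | zero => simpa using h0
  | succ n ih =>
    have hc : ((n : ℚ) + 1) * ((m + (n + 1) + 1).choose (n + 1) : ℚ)
        = (m + n + 2) * ((m + n + 1).choose n : ℚ) := by
      have h := congrArg (Nat.cast : ℕ → ℚ) (Nat.add_one_mul_choose_eq (m + n + 1) n)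
      push_cast at h
      linear_combination -h
    refine mul_left_cancel₀ (Nat.cast_add_one_ne_zero n) ?_
    linear_combination hx n + (m + n + 2) * ih - ((m + n + 1).choose n : ℚ) * hG n
      - G (n + 1) * hc

lemma succ_mul_H_succ_sub (N : ℕ) : ((N : ℚ) + 1) * (H (N + 1) - H N) = 1 := by
  rw [H, H, sum_range_succ, add_sub_cancel_left]
  field_simp

lemma succ_sq_mul_H2_succ_sub (N : ℕ) : ((N : ℚ) + 1) ^ 2 * (H2 (N + 1) - H2 N) = 1 := by
  rw [H2, H2, sum_range_succ, add_sub_cancel_left]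
  field_simp

def binom (p k : ℕ) : ℚ := ((p + k).choose p : ℚ)

def binomH (p k : ℕ) : ℚ := binom p k * H (p + k)

lemma succ_mul_binom_succ (p k : ℕ) :
    ((k : ℚ) + 1) * binom p (k + 1) = (p + k + 1) * binom p k := by
  have h := Nat.add_one_mul_choose_eq (p + k) k
  rw [← Nat.choose_symm_add, add_assoc, ← Nat.choose_symm_add] at h
  have hq := congrArg (Nat.cast : ℕ → ℚ) h
  push_cast at hq
  rw [binom, binom]
  linear_combination -hq

lemma succ_mul_binomH_succ (p k : ℕ) :
    ((k : ℚ) + 1) * binomH p (k + 1) = (p + k + 1) * binomH p k + binom p k := by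
  have hH := succ_mul_H_succ_sub (p + k)
  push_cast at hH
  rw [binomH, binomH, ← add_assoc]
  linear_combination H (p + k + 1) * succ_mul_binom_succ p k + binom p k * hH

lemma cauchyProduct_binom_binom (p q n : ℕ) :
    cauchyProduct (binom p) (binom q) n = ((p + q + n + 1).choose n : ℚ) := by
  simpa using eq_choose_mul_of_succ_mul (m := p + q) (r := 0) (G := 1)
    (by simp [cauchyProduct_zero, binom])
    (fun n => by
      rw [succ_mul_cauchyProduct_succ (α := (p : ℚ)) (β := (q : ℚ)) (a' := 0) (b' := 0)
        (fun k => by simp [succ_mul_binom_succ]) (fun k => by simp [succ_mul_binom_succ])]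
      simp [cauchyProduct])
    (by simp) n

lemma cauchyProduct_binomH_binom (p q n : ℕ) :
    cauchyProduct (binomH p) (binom q) n
      = ((p + q + n + 1).choose n : ℚ) * (H p + H (p + q + n + 1) - H (p + q + 1)) := by
  refine eq_choose_mul_of_succ_mul (m := p + q) (r := fun _ => 1)
    (G := fun n => H p + H (p + q + n + 1) - H (p + q + 1))
    (by simp [cauchyProduct_zero, binomH, binom]) (fun n => ?_) (fun n => ?_) n
  · rw [succ_mul_cauchyProduct_succ (α := (p : ℚ)) (β := (q : ℚ)) (b' := 0)
      (succ_mul_binomH_succ p) (fun k => by simp [succ_mul_binom_succ]),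
      cauchyProduct_binom_binom]
    simp [cauchyProduct]
  · have := succ_mul_H_succ_sub (p + q + n + 1)
    push_cast at this ⊢
    linear_combination this

lemma cauchyProduct_binom_binomH (p q n : ℕ) :
    cauchyProduct (binom p) (binomH q) n
      = ((p + q + n + 1).choose n : ℚ) * (H q + H (p + q + n + 1) - H (p + q + 1)) := by
  rw [cauchyProduct_comm, cauchyProduct_binomH_binom, add_comm q p]

lemma cauchyProduct_binomH_binomH (p q n : ℕ) :
    cauchyProduct (binomH p) (binomH q) n
      = ((p + q + n + 1).choose n : ℚ)
          * ((H2 (p + q + 1) - H2 (p + q + n + 1))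
            + (H p - H (p + q + 1) + H (p + q + n + 1))
              * (H q - H (p + q + 1) + H (p + q + n + 1))) := by
  refine eq_choose_mul_of_succ_mul (m := p + q)
    (r := fun n => H p + H q + 2 * (H (p + q + n + 1) - H (p + q + 1)))
    (G := fun n => (H2 (p + q + 1) - H2 (p + q + n + 1))
      + (H p - H (p + q + 1) + H (p + q + n + 1)) * (H q - H (p + q + 1) + H (p + q + n + 1)))
    (by simp [cauchyProduct_zero, binomH, binom]) (fun n => ?_) (fun n => ?_) n
  · rw [succ_mul_cauchyProduct_succ (α := (p : ℚ)) (β := (q : ℚ))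
      (succ_mul_binomH_succ p) (succ_mul_binomH_succ q),
      cauchyProduct_binom_binomH, cauchyProduct_binomH_binom]
    push_cast
    ring
  · have hH := succ_mul_H_succ_sub (p + q + n + 1)
    have hH2 := succ_sq_mul_H2_succ_sub (p + q + n + 1)
    push_cast at hH hH2 ⊢
    set d := H (p + q + n + 1 + 1) - H (p + q + n + 1)
    set e := H2 (p + q + n + 1 + 1) - H2 (p + q + n + 1)
    -- `G (n + 1) - G n = d * r n + d ^ 2 - e`, where `s * d = 1` and `s ^ 2 * e = 1`
    -- for `s = p + q + n + 2`
    linear_combination (H p + H q + 2 * (H (p + q + n + 1) - H (p + q + 1)) + d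
      + (p + q + n + 2) * e) * hH - d * hH2

theorem stmt6 (p q n : ℕ) :
    ∑ k ∈ Finset.range (n + 1),
        ((p + k).choose p : ℚ) * ((q + n - k).choose q : ℚ) * H (p + k) * H (q + n - k)
      = ((p + q + n + 1).choose n : ℚ)
          * ((H2 (p + q + 1) - H2 (p + q + n + 1))
            + (H p - H (p + q + 1) + H (p + q + n + 1))
              * (H q - H (p + q + 1) + H (p + q + n + 1))) := by
  rw [← cauchyProduct_binomH_binomH, cauchyProduct, Nat.sum_antidiagonal_eq_sum_range_succ_mk]
  refine sum_congr rfl fun k hk => ?_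
  rw [binomH, binomH, binom, binom, Nat.add_sub_assoc (Nat.lt_succ_iff.mp (mem_range.mp hk))]
  ring
end

section
/- For all natural numbers n, the sum over k from 0 to n of H_k·H_{n-k} equals (n+1)·[(1 - H^{(2)}_{n+1}) + (H_{n+1} - 1)²]. -/
open Finset BigOperators

/-!
Write the convolution as a sum over the antidiagonal `i + j = n`. Since `H (i + 1) = H i + 1/(i + 1)`,
passing from `n` to `n + 1` adds `∑_{i+j=n} H j / (i + 1)`, and by induction in the same way this
sum equals `H (n+1)² - H2 (n+1)`; the increment there is `∑_{i+j=n} 1/((i+1)(j+1)) = 2 H (n+1) / (n+2)`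
by partial fractions.
-/

lemma H_zero : H 0 = 0 := by
  simp [H]

lemma H_succ (n : ℕ) : H (n + 1) = H n + 1 / (n + 1 : ℚ) := by
  simp [H, sum_range_succ]

lemma H2_succ (n : ℕ) : H2 (n + 1) = H2 n + 1 / ((n + 1 : ℚ))^2 := by
  simp [H2, sum_range_succ]

lemma sum_antidiagonal_succ_H_mul (g : ℕ → ℚ) (n : ℕ) :
    ∑ p ∈ antidiagonal (n + 1), H p.1 * g p.2
      = ∑ p ∈ antidiagonal n, H p.1 * g p.2 + ∑ p ∈ antidiagonal n, g p.2 / (p.1 + 1) := by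
  rw [Nat.sum_antidiagonal_succ, H_zero, zero_mul, zero_add, ← sum_add_distrib]
  refine sum_congr rfl fun p _ => ?_
  rw [H_succ]
  ring

lemma sum_antidiagonal_inv_succ (n : ℕ) :
    ∑ p ∈ antidiagonal n, 1 / ((p.1 : ℚ) + 1) = H (n + 1) := by
  rw [Nat.sum_antidiagonal_eq_sum_range_succ_mk]
  rfl

lemma sum_antidiagonal_inv_succ_mul_inv_succ (n : ℕ) :
    ∑ p ∈ antidiagonal n, 1 / (((p.1 : ℚ) + 1) * ((p.2 : ℚ) + 1))
      = 2 * H (n + 1) / (n + 2) := by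
  have partial_fractions : ∀ p ∈ antidiagonal n,
      1 / (((p.1 : ℚ) + 1) * ((p.2 : ℚ) + 1))
        = (1 / ((p.1 : ℚ) + 1) + 1 / ((p.2 : ℚ) + 1)) / (n + 2) := by
    intro p hp
    have hn : (n : ℚ) = p.1 + p.2 := by exact_mod_cast (mem_antidiagonal.mp hp).symm
    rw [hn]
    field_simp
    ring
  have swapped : ∑ p ∈ antidiagonal n, 1 / ((p.2 : ℚ) + 1) = H (n + 1) := by
    rw [← sum_antidiagonal_inv_succ n, ← Nat.sum_antidiagonal_swap]
    rfl
  rw [sum_congr rfl partial_fractions, ← sum_div, sum_add_distrib, sum_antidiagonal_inv_succ,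
    swapped]
  ring

lemma sum_antidiagonal_H_mul_inv_succ (n : ℕ) :
    ∑ p ∈ antidiagonal n, H p.1 * (1 / ((p.2 : ℚ) + 1)) = H (n + 1) ^ 2 - H2 (n + 1) := by
  induction n with
  | zero => simp [H, H2]
  | succ n ih =>
    have increment : ∑ p ∈ antidiagonal n, 1 / ((p.2 : ℚ) + 1) / (p.1 + 1)
        = 2 * H (n + 1) / (n + 2) := by
      rw [← sum_antidiagonal_inv_succ_mul_inv_succ]
      refine sum_congr rfl fun p _ => ?_
      field_simp
    rw [sum_antidiagonal_succ_H_mul (fun m => 1 / ((m : ℚ) + 1)), ih, increment,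
      H_succ (n + 1), H2_succ (n + 1)]
    push_cast
    field_simp
    ring

lemma sum_antidiagonal_H_mul_H (n : ℕ) :
    ∑ p ∈ antidiagonal n, H p.1 * H p.2
      = (n + 1) * ((1 - H2 (n + 1)) + (H (n + 1) - 1) ^ 2) := by
  induction n with
  | zero => simp [H, H2]
  | succ n ih =>
    have increment : ∑ p ∈ antidiagonal n, H p.2 / (p.1 + 1) = H (n + 1) ^ 2 - H2 (n + 1) := by
      rw [← sum_antidiagonal_H_mul_inv_succ, ← Nat.sum_antidiagonal_swap]
      refine sum_congr rfl fun p _ => ?_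
      simp only [Prod.fst_swap, Prod.snd_swap]
      ring
    rw [sum_antidiagonal_succ_H_mul, ih, increment, H_succ (n + 1), H2_succ (n + 1)]
    push_cast
    field_simp
    ring

theorem stmt7 (n : ℕ) :
    ∑ k ∈ Finset.range (n + 1), H k * H (n - k)
      = (n + 1) * ((1 - H2 (n + 1)) + (H (n + 1) - 1)^2) := by
  rw [← Nat.sum_antidiagonal_eq_sum_range_succ (fun i j => H i * H j)]
  exact sum_antidiagonal_H_mul_H n
end

section
/- For all natural numbers p, q, n, the sum over k from 0 to n of C(p+n, k)·C(q+n, n-k)·H_{p+n-k}·H_{q+k} equals C(p+q+2n, n)·[(H^{(2)}_{p+q+n} - H^{(2)}_{p+q+2n}) + (H_{p+n} + H_{p+q+n} - H_{p+q+2n})·(H_{q+n} + H_{p+q+n} - H_{p+q+2n})]. -/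
open Finset BigOperators

/-!
Vandermonde's identity `C(x + y, n) = ∑_{i + j = n} C(x, i) C(y, j)` is an identity of polynomials
in `x` and `y`. For the falling factorial `P = x (x - 1) ⋯ (x - k + 1)` and a natural number
`N ≥ k`, `P'/P = H N - H (N - k)` and `P''/P = (P'/P)^2 - (H2 N - H2 (N - k))` at `x = N`.
Applying `∂ₓ`, `∂_y` and `∂ₓ∂_y` to Vandermonde's identity at `(x, y) = (p + n, q + n)` and
writing `H (a - i) = H a - (H a - H (a - i))` gives the theorem. The two-variable identity is
handled one variable at a time: the `x`-derivative identity holds at every natural `y`, hence as a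
polynomial identity in `y`, which is then differentiated.
-/

open Polynomial

section LogDerivative

variable {ι K : Type*} [Field K] (s : Finset ι) (c : ι → K) {r : K}

theorem eval_derivative_prod_X_sub_C (h : ∀ j ∈ s, r - c j ≠ 0) :
    (derivative (∏ j ∈ s, (X - C (c j)))).eval r
      = (∏ j ∈ s, (X - C (c j))).eval r * ∑ j ∈ s, (r - c j)⁻¹ := by
  classical
  induction s using Finset.induction_on with
  | empty => simp
  | insert i s hi ih =>
    rw [forall_mem_insert] at h
    rw [prod_insert hi, sum_insert hi, derivative_mul]
    simp only [derivative_sub, derivative_X, derivative_C, sub_zero, eval_add, eval_mul, eval_sub,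
      eval_X, eval_C, one_mul, ih h.2]
    field_simp [h.1]

theorem eval_derivative_derivative_prod_X_sub_C (h : ∀ j ∈ s, r - c j ≠ 0) :
    (derivative (derivative (∏ j ∈ s, (X - C (c j))))).eval r
      = (∏ j ∈ s, (X - C (c j))).eval r *
          ((∑ j ∈ s, (r - c j)⁻¹) ^ 2 - ∑ j ∈ s, (r - c j)⁻¹ ^ 2) := by
  classical
  induction s using Finset.induction_on with
  | empty => simp
  | insert i s hi ih =>
    rw [forall_mem_insert] at h
    rw [prod_insert hi, sum_insert hi, sum_insert hi]
    simp only [derivative_mul, derivative_add, derivative_sub, derivative_X, derivative_C, sub_zero,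
      one_mul, eval_add, eval_mul, eval_sub, eval_X, eval_C, ih h.2,
      eval_derivative_prod_X_sub_C s c h.2]
    field_simp [h.1]
    ring

end LogDerivative

theorem descPochhammer_eq_prod_range (R : Type*) [CommRing R] (n : ℕ) :
    descPochhammer R n = ∏ j ∈ range n, (X - C (j : R)) := by
  induction n with
  | zero => simp
  | succ n ih => rw [descPochhammer_succ_right, ih, prod_range_succ, map_natCast]

theorem sum_range_tsub_eq_sub_sum_range {M : Type*} [AddCommGroup M] (g : ℕ → M) {k N : ℕ}
    (hk : k ≤ N) :
    ∑ j ∈ range k, g (N - j)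
      = ∑ i ∈ range N, g (i + 1) - ∑ i ∈ range (N - k), g (i + 1) := by
  induction k with
  | zero => simp
  | succ k ih =>
    rw [sum_range_succ, ih (by omega), show N - k = N - (k + 1) + 1 by omega, sum_range_succ,
      show N - (k + 1) + 1 = N - k by omega]
    abel

theorem H_sub_H_tsub_eq_sum_inv {k N : ℕ} (hk : k ≤ N) :
    H N - H (N - k) = ∑ j ∈ range k, ((N : ℚ) - j)⁻¹ := by
  have := sum_range_tsub_eq_sub_sum_range (fun m : ℕ ↦ (m : ℚ)⁻¹) hk
  push_cast at this
  simp only [H, one_div, ← this]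
  refine sum_congr rfl fun j hj ↦ ?_
  rw [Nat.cast_sub (by grind)]

theorem H2_sub_H2_tsub_eq_sum_inv_sq {k N : ℕ} (hk : k ≤ N) :
    H2 N - H2 (N - k) = ∑ j ∈ range k, ((N : ℚ) - j)⁻¹ ^ 2 := by
  have := sum_range_tsub_eq_sub_sum_range (fun m : ℕ ↦ (m : ℚ)⁻¹ ^ 2) hk
  push_cast at this
  simp only [H2, one_div, ← inv_pow, ← this]
  refine sum_congr rfl fun j hj ↦ ?_
  rw [Nat.cast_sub (by grind)]

theorem Polynomial.eq_of_eval_natCast_eq {R : Type*} [CommRing R] [IsDomain R] [CharZero R]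
    {P Q : R[X]} (h : ∀ m : ℕ, P.eval (m : R) = Q.eval (m : R)) : P = Q :=
  eq_of_infinite_eval_eq P Q (Set.infinite_of_injective_forall_mem Nat.cast_injective h)

theorem eval_derivative_descPochhammer {k N : ℕ} (hk : k ≤ N) :
    (derivative (descPochhammer ℚ k)).eval (N : ℚ)
      = (descPochhammer ℚ k).eval (N : ℚ) * (H N - H (N - k)) := by
  have hne : ∀ j ∈ range k, (N : ℚ) - j ≠ 0 := fun j hj ↦
    sub_ne_zero.2 (by norm_cast; grind)
  rw [descPochhammer_eq_prod_range, eval_derivative_prod_X_sub_C _ _ hne,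
    H_sub_H_tsub_eq_sum_inv hk]

theorem eval_derivative_derivative_descPochhammer {k N : ℕ} (hk : k ≤ N) :
    (derivative (derivative (descPochhammer ℚ k))).eval (N : ℚ)
      = (descPochhammer ℚ k).eval (N : ℚ) *
          ((H N - H (N - k)) ^ 2 - (H2 N - H2 (N - k))) := by
  have hne : ∀ j ∈ range k, (N : ℚ) - j ≠ 0 := fun j hj ↦
    sub_ne_zero.2 (by norm_cast; grind)
  rw [descPochhammer_eq_prod_range, eval_derivative_derivative_prod_X_sub_C _ _ hne,
    H_sub_H_tsub_eq_sum_inv hk, H2_sub_H2_tsub_eq_sum_inv_sq hk]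

noncomputable def choosePoly (k : ℕ) : ℚ[X] := C (k.factorial : ℚ)⁻¹ * descPochhammer ℚ k

theorem choosePoly_eval_natCast (k m : ℕ) : (choosePoly k).eval (m : ℚ) = m.choose k := by
  rw [choosePoly, eval_C_mul, Nat.cast_choose_eq_descPochhammer_div, inv_mul_eq_div]

theorem eval_derivative_choosePoly {k N : ℕ} (hk : k ≤ N) :
    (derivative (choosePoly k)).eval (N : ℚ) = N.choose k * (H N - H (N - k)) := by
  rw [choosePoly, derivative_C_mul, eval_C_mul, eval_derivative_descPochhammer hk, ← mul_assoc,
    ← eval_C_mul, ← choosePoly, choosePoly_eval_natCast]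

theorem eval_derivative_derivative_choosePoly {k N : ℕ} (hk : k ≤ N) :
    (derivative (derivative (choosePoly k))).eval (N : ℚ)
      = N.choose k * ((H N - H (N - k)) ^ 2 - (H2 N - H2 (N - k))) := by
  rw [choosePoly, derivative_C_mul, derivative_C_mul, eval_C_mul,
    eval_derivative_derivative_descPochhammer hk, ← mul_assoc, ← eval_C_mul, ← choosePoly,
    choosePoly_eval_natCast]

theorem choosePoly_comp_X_add_natCast (b n : ℕ) :
    (choosePoly n).comp (X + C (b : ℚ))
      = ∑ ij ∈ antidiagonal n, C (b.choose ij.2 : ℚ) * choosePoly ij.1 := by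
  refine eq_of_eval_natCast_eq fun m ↦ ?_
  simp only [eval_comp, eval_add, eval_X, eval_C, eval_finsetSum, eval_C_mul]
  rw [← Nat.cast_add, choosePoly_eval_natCast, Nat.add_choose_eq, Nat.cast_sum]
  refine sum_congr rfl fun ij _ ↦ ?_
  rw [choosePoly_eval_natCast, Nat.cast_mul, mul_comm]

theorem eval_derivative_comp_X_add_C {R : Type*} [CommRing R] (P : R[X]) (c r : R) :
    (derivative (P.comp (X + C c))).eval r = (derivative P).eval (r + c) := by
  simp [derivative_comp]

theorem sum_antidiagonal_choose_mul_choose_mul_H_sub {a n : ℕ} (b : ℕ) (hn : n ≤ a) :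
    ∑ ij ∈ antidiagonal n, (a.choose ij.1 : ℚ) * b.choose ij.2 * (H a - H (a - ij.1))
      = (a + b).choose n * (H (a + b) - H (a + b - n)) := by
  have hdiff := congrArg (fun P ↦ (derivative P).eval (a : ℚ))
    (choosePoly_comp_X_add_natCast b n)
  simp only [eval_derivative_comp_X_add_C, derivative_sum, derivative_C_mul, eval_finsetSum,
    eval_C_mul] at hdiff
  rw [← Nat.cast_add, eval_derivative_choosePoly (by omega)] at hdiff
  rw [hdiff]
  refine sum_congr rfl fun ij hij ↦ ?_
  rw [eval_derivative_choosePoly ((HasAntidiagonal.antidiagonal.fst_le hij).trans hn)]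
  ring

theorem derivative_choosePoly_comp_X_add_natCast {a n : ℕ} (hn : n ≤ a) :
    (derivative (choosePoly n)).comp (X + C (a : ℚ))
      = ∑ ij ∈ antidiagonal n, C (a.choose ij.1 * (H a - H (a - ij.1))) * choosePoly ij.2 := by
  refine eq_of_eval_natCast_eq fun m ↦ ?_
  simp only [eval_comp, eval_add, eval_X, eval_C, eval_finsetSum, eval_C_mul,
    choosePoly_eval_natCast]
  rw [← Nat.cast_add, eval_derivative_choosePoly (by omega), add_comm m,
    ← sum_antidiagonal_choose_mul_choose_mul_H_sub m hn]
  refine sum_congr rfl fun ij _ ↦ ?_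
  ring

theorem sum_antidiagonal_choose_mul_choose_mul_H_sub_mul_H_sub {a b n : ℕ} (ha : n ≤ a)
    (hb : n ≤ b) :
    ∑ ij ∈ antidiagonal n,
        (a.choose ij.1 : ℚ) * b.choose ij.2 * ((H a - H (a - ij.1)) * (H b - H (b - ij.2)))
      = (a + b).choose n *
          ((H (a + b) - H (a + b - n)) ^ 2 - (H2 (a + b) - H2 (a + b - n))) := by
  have hdiff := congrArg (fun P ↦ (derivative P).eval (b : ℚ))
    (derivative_choosePoly_comp_X_add_natCast ha)
  simp only [eval_derivative_comp_X_add_C, derivative_sum, derivative_C_mul, eval_finsetSum,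
    eval_C_mul] at hdiff
  rw [← Nat.cast_add, eval_derivative_derivative_choosePoly (by omega), add_comm b] at hdiff
  rw [hdiff]
  refine sum_congr rfl fun ij hij ↦ ?_
  rw [eval_derivative_choosePoly ((HasAntidiagonal.antidiagonal.snd_le hij).trans hb)]
  ring

theorem sum_antidiagonal_choose_mul_choose_mul_H_mul_H {a b n : ℕ} (ha : n ≤ a) (hb : n ≤ b) :
    ∑ ij ∈ antidiagonal n, (a.choose ij.1 : ℚ) * b.choose ij.2 * H (a - ij.1) * H (b - ij.2)
      = (a + b).choose n * ((H2 (a + b - n) - H2 (a + b))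
          + (H a + H (a + b - n) - H (a + b)) * (H b + H (a + b - n) - H (a + b))) := by
  have hvand :
      ∑ ij ∈ antidiagonal n, (a.choose ij.1 : ℚ) * b.choose ij.2 = (a + b).choose n := by
    rw [Nat.add_choose_eq, Nat.cast_sum]
    simp only [Nat.cast_mul]
  have hA := sum_antidiagonal_choose_mul_choose_mul_H_sub b ha
  have hB := sum_antidiagonal_choose_mul_choose_mul_H_sub a hb
  rw [← Nat.sum_antidiagonal_swap, add_comm b] at hB
  have hAB := sum_antidiagonal_choose_mul_choose_mul_H_sub_mul_H_sub ha hb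
  have hexpand : ∀ ij ∈ antidiagonal n,
      (a.choose ij.1 : ℚ) * b.choose ij.2 * H (a - ij.1) * H (b - ij.2)
        = (a.choose ij.1 : ℚ) * b.choose ij.2 * ((H a - H (a - ij.1)) * (H b - H (b - ij.2)))
          - H b * ((a.choose ij.1 : ℚ) * b.choose ij.2 * (H a - H (a - ij.1)))
          - H a * ((b.choose ij.2 : ℚ) * a.choose ij.1 * (H b - H (b - ij.2)))
          + H a * H b * ((a.choose ij.1 : ℚ) * b.choose ij.2) := fun _ _ ↦ by ring
  rw [sum_congr rfl hexpand]
  simp only [sum_add_distrib, sum_sub_distrib, ← mul_sum, Prod.fst_swap, Prod.snd_swap] at hB ⊢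
  rw [hA, hB, hAB, hvand]
  ring

theorem stmt13 (p q n : ℕ) :
    ∑ k ∈ Finset.range (n + 1),
        ((p + n).choose k : ℚ) * ((q + n).choose (n - k) : ℚ) * H (p + n - k) * H (q + k)
      = ((p + q + 2 * n).choose n : ℚ)
          * ((H2 (p + q + n) - H2 (p + q + 2 * n))
            + (H (p + n) + H (p + q + n) - H (p + q + 2 * n))
              * (H (q + n) + H (p + q + n) - H (p + q + 2 * n))) := by
  have hsum := sum_antidiagonal_choose_mul_choose_mul_H_mul_H (a := p + n) (b := q + n)
    (Nat.le_add_left n p) (Nat.le_add_left n q)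
  rw [Nat.sum_antidiagonal_eq_sum_range_succ_mk, show p + n + (q + n) = p + q + 2 * n by ring,
    show p + q + 2 * n - n = p + q + n by omega] at hsum
  rw [← hsum]
  refine sum_congr rfl fun k hk ↦ ?_
  rw [show q + n - (n - k) = q + k by grind]
end

section
/- For all natural numbers n, the sum over k from 0 to n of C(n,k)²·H_k·H_{n-k} equals C(2n, n)·[(H^{(2)}_n - H^{(2)}_{2n}) + (2H_n - H_{2n})²]. -/
/-!
Let `b k = X(X-1)⋯(X-k+1)/k!`, so that `b k` evaluates to `C(x, k)`. Vandermonde's identity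
`b n (x + y) = ∑ b k (x) b (n-k) (y)` holds for all rationals `x`, `y`, and may therefore be
differentiated in `x` and in `y`; doing so with the twisted derivative `D - c` gives
`∑ (D - c) b k (x) · (D - c) b (n-k) (y) = (D - c)² b n (x + y)`.
Logarithmic differentiation of the product gives `b k' (n) = C(n,k) (H n - H (n-k))`, so for
`c = H n` and `x = y = n` the `k`-th term on the left is `C(n,k)² H k H (n-k)`, while the right
side is `C(2n,n)` times a polynomial in `H n - H (2n)` and `H2 n - H2 (2n)`.
-/

open Finset BigOperators

open Polynomial

theorem sum_range_sub_sum_range_sub {M : Type*} [AddCommGroup M] (f : ℕ → M) {k m : ℕ}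
    (hk : k ≤ m) :
    ∑ i ∈ range m, f i - ∑ i ∈ range (m - k), f i = ∑ i ∈ range k, f (m - 1 - i) := by
  induction k with
  | zero => simp
  | succ k ih =>
    rw [sum_range_succ, ← ih (by omega), (by omega : m - k = m - (k + 1) + 1), sum_range_succ,
      (by omega : m - 1 - k = m - (k + 1))]
    abel

theorem natCast_sub_one_sub_add_one {i m : ℕ} (hi : i < m) :
    ((m - 1 - i : ℕ) : ℚ) + 1 = m - i := by
  rw [Nat.sub_sub, Nat.cast_sub (by omega)]
  push_cast
  ring

theorem H_sub_H_sub {k m : ℕ} (hk : k ≤ m) :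
    H m - H (m - k) = ∑ i ∈ range k, ((m : ℚ) - i)⁻¹ := by
  rw [H, H, sum_range_sub_sum_range_sub _ hk]
  refine sum_congr rfl fun i hi => ?_
  rw [natCast_sub_one_sub_add_one ((mem_range.mp hi).trans_le hk), one_div]

theorem H2_sub_H2_sub {k m : ℕ} (hk : k ≤ m) :
    H2 m - H2 (m - k) = ∑ i ∈ range k, ((m : ℚ) - i)⁻¹ ^ 2 := by
  rw [H2, H2, sum_range_sub_sum_range_sub _ hk]
  refine sum_congr rfl fun i hi => ?_
  rw [natCast_sub_one_sub_add_one ((mem_range.mp hi).trans_le hk), one_div, inv_pow]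

section LogDerivative

variable {K : Type*} [Field K]

theorem eval_derivative_descPochhammer_s14 (k : ℕ) {t : K} (ht : ∀ i < k, t - i ≠ 0) :
    (derivative (descPochhammer K k)).eval t
      = (descPochhammer K k).eval t * ∑ i ∈ range k, (t - i)⁻¹ := by
  induction k with
  | zero => simp
  | succ k ih =>
    have hk := ht k k.lt_succ_self
    simp only [descPochhammer_succ_right, derivative_mul, eval_add, eval_mul, eval_sub,
      derivative_sub, derivative_X, derivative_natCast, eval_X, eval_natCast, sub_zero,
      mul_one, ih fun i hi => ht i (by omega), sum_range_succ]
    field_simp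

theorem eval_derivative_derivative_descPochhammer_s14 (k : ℕ) {t : K} (ht : ∀ i < k, t - i ≠ 0) :
    (derivative (derivative (descPochhammer K k))).eval t
      = (descPochhammer K k).eval t *
          ((∑ i ∈ range k, (t - i)⁻¹) ^ 2 - ∑ i ∈ range k, (t - i)⁻¹ ^ 2) := by
  induction k with
  | zero => simp
  | succ k ih =>
    have hk := ht k k.lt_succ_self
    have ht' : ∀ i < k, t - i ≠ 0 := fun i hi => ht i (by omega)
    simp only [descPochhammer_succ_right, derivative_mul, derivative_add, eval_add, eval_mul,
      eval_sub, derivative_sub, derivative_X, derivative_natCast, eval_X,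
      eval_natCast, sub_zero, mul_one, ih ht', eval_derivative_descPochhammer_s14 k ht', sum_range_succ]
    field_simp
    ring

end LogDerivative

noncomputable def binomPoly (k : ℕ) : ℚ[X] := C (k.factorial : ℚ)⁻¹ * descPochhammer ℚ k

theorem eval_binomPoly (k : ℕ) (x : ℚ) : (binomPoly k).eval x = Ring.choose x k := by
  rw [Ring.choose_eq_smul, binomPoly, eval_mul, eval_C, smul_eq_mul, ← aeval_eq_smeval, aeval_def,
    eval₂_eq_eval_map, descPochhammer_map]

theorem eval_binomPoly_natCast (k m : ℕ) : (binomPoly k).eval (m : ℚ) = m.choose k := by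
  rw [eval_binomPoly, Ring.choose_natCast]

theorem inv_factorial_mul_eval_descPochhammer (k : ℕ) (x : ℚ) :
    (k.factorial : ℚ)⁻¹ * (descPochhammer ℚ k).eval x = Ring.choose x k := by
  rw [← eval_binomPoly, binomPoly, eval_mul, eval_C]

theorem natCast_sub_natCast_ne_zero {k m : ℕ} (hk : k ≤ m) : ∀ i < k, (m : ℚ) - i ≠ 0 :=
  fun i hi => sub_ne_zero.mpr (by exact_mod_cast (by omega : m ≠ i))

theorem eval_derivative_binomPoly_natCast {k m : ℕ} (hk : k ≤ m) :
    (derivative (binomPoly k)).eval (m : ℚ) = m.choose k * (H m - H (m - k)) := by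
  rw [binomPoly, derivative_C_mul, eval_mul, eval_C,
    eval_derivative_descPochhammer_s14 k (natCast_sub_natCast_ne_zero hk), ← mul_assoc,
    inv_factorial_mul_eval_descPochhammer, Ring.choose_natCast, H_sub_H_sub hk]

theorem eval_derivative_derivative_binomPoly_natCast {k m : ℕ} (hk : k ≤ m) :
    (derivative (derivative (binomPoly k))).eval (m : ℚ)
      = m.choose k * ((H m - H (m - k)) ^ 2 - (H2 m - H2 (m - k))) := by
  rw [binomPoly, derivative_C_mul, derivative_C_mul, eval_mul, eval_C,
    eval_derivative_derivative_descPochhammer_s14 k (natCast_sub_natCast_ne_zero hk), ← mul_assoc,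
    inv_factorial_mul_eval_descPochhammer, Ring.choose_natCast, H_sub_H_sub hk,
    H2_sub_H2_sub hk]

theorem binomPoly_eval_add (n : ℕ) (x y : ℚ) :
    (binomPoly n).eval (x + y)
      = ∑ k ∈ range (n + 1), (binomPoly k).eval x * (binomPoly (n - k)).eval y := by
  simp only [eval_binomPoly]
  rw [Ring.add_choose_eq n (Commute.all x y), Nat.sum_antidiagonal_eq_sum_range_succ_mk]

section Twist

variable {R : Type*} [CommRing R]

noncomputable def twistDeriv (c : R) : R[X] →ₗ[R] R[X] := derivative - c • LinearMap.id

theorem twistDeriv_apply (c : R) (P : R[X]) : twistDeriv c P = derivative P - c • P := rfl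

theorem twistDeriv_comp_X_add_C (c y : R) (P : R[X]) :
    (twistDeriv c P).comp (X + C y) = twistDeriv c (P.comp (X + C y)) := by
  simp [twistDeriv_apply, derivative_comp, smul_comp]

theorem eval_twistDeriv_add_of_eval_add [IsDomain R] [Infinite R] {ι : Type*} (s : Finset ι)
    {P : R[X]} {Q : ι → R[X]} {a : ι → R} {y : R}
    (h : ∀ x, P.eval (x + y) = ∑ i ∈ s, a i * (Q i).eval x) (c x : R) :
    (twistDeriv c P).eval (x + y) = ∑ i ∈ s, a i * (twistDeriv c (Q i)).eval x := by
  have hP : P.comp (X + C y) = ∑ i ∈ s, a i • Q i :=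
    funext fun x => by simp [eval_comp, h, eval_finsetSum]
  calc (twistDeriv c P).eval (x + y) = ((twistDeriv c P).comp (X + C y)).eval x := by
        simp [eval_comp]
    _ = (twistDeriv c (∑ i ∈ s, a i • Q i)).eval x := by rw [twistDeriv_comp_X_add_C, hP]
    _ = ∑ i ∈ s, a i * (twistDeriv c (Q i)).eval x := by simp [eval_finsetSum]

end Twist

theorem eval_twistDeriv_twistDeriv_binomPoly_add (n : ℕ) (c x y : ℚ) :
    (twistDeriv c (twistDeriv c (binomPoly n))).eval (x + y)
      = ∑ k ∈ range (n + 1),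
          (twistDeriv c (binomPoly k)).eval x * (twistDeriv c (binomPoly (n - k))).eval y := by
  have hy (x y : ℚ) : (twistDeriv c (binomPoly n)).eval (y + x)
      = ∑ k ∈ range (n + 1), (binomPoly k).eval x * (twistDeriv c (binomPoly (n - k))).eval y :=
    eval_twistDeriv_add_of_eval_add _ (fun y => by rw [add_comm, binomPoly_eval_add]) c y
  have hx := eval_twistDeriv_add_of_eval_add (range (n + 1))
    (Q := binomPoly) (a := fun k => (twistDeriv c (binomPoly (n - k))).eval y)
    (fun x => by rw [add_comm, hy]; exact sum_congr rfl fun k _ => mul_comm _ _) c x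
  rw [hx]
  exact sum_congr rfl fun k _ => mul_comm _ _

theorem eval_twistDeriv_H_binomPoly_natCast {k n : ℕ} (hk : k ≤ n) :
    (twistDeriv (H n) (binomPoly k)).eval (n : ℚ) = -(n.choose k * H (n - k)) := by
  rw [twistDeriv_apply, eval_sub, eval_smul, smul_eq_mul, eval_derivative_binomPoly_natCast hk,
    eval_binomPoly_natCast]
  ring

theorem stmt14 (n : ℕ) :
    ∑ k ∈ Finset.range (n + 1), (n.choose k : ℚ)^2 * H k * H (n - k)
      = ((2 * n).choose n : ℚ)
          * ((H2 n - H2 (2 * n)) + (2 * H n - H (2 * n))^2) := by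
  have hn : n ≤ 2 * n := by omega
  have h2n : (n : ℚ) + n = ((2 * n : ℕ) : ℚ) := by push_cast; ring
  have hvand := eval_twistDeriv_twistDeriv_binomPoly_add n (H n) n n
  calc ∑ k ∈ range (n + 1), (n.choose k : ℚ) ^ 2 * H k * H (n - k)
      = ∑ k ∈ range (n + 1), (twistDeriv (H n) (binomPoly k)).eval (n : ℚ)
          * (twistDeriv (H n) (binomPoly (n - k))).eval (n : ℚ) := by
        refine sum_congr rfl fun k hk => ?_
        have hk : k ≤ n := Nat.lt_succ_iff.mp (mem_range.mp hk)
        rw [eval_twistDeriv_H_binomPoly_natCast hk, eval_twistDeriv_H_binomPoly_natCast (by omega),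
          Nat.choose_symm hk, Nat.sub_sub_self hk]
        ring
    _ = (twistDeriv (H n) (twistDeriv (H n) (binomPoly n))).eval ((2 * n : ℕ) : ℚ) := by
        rw [← hvand, h2n]
    _ = _ := by
        simp only [twistDeriv_apply, derivative_sub, derivative_smul, eval_sub, eval_smul,
          smul_eq_mul, eval_derivative_derivative_binomPoly_natCast hn,
          eval_derivative_binomPoly_natCast hn,
          eval_binomPoly_natCast, Nat.sub_eq_of_eq_add (two_mul n)]
        ring
end
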